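/- Every graph G falls under precisely one of these four cases, where M = M[IAS(G)]: (1) if n = 0 then κ*(M) = 0 and τ(M) = ∞; (2) if n = 1 or G is disconnected then τ(M) = κ*(M) = 1; (3) if n > 1, G is connected, and G has a pendant vertex or a pair of twin vertices, then τ(M) = κ*(M) = 2; (4) if n > 1, G is connected, and G has neither a pendant vertex nor a pair of twin vertices, then τ(M) = κ*(M) = 3. -/

import Mathlib

open scoped ENat

variable {V : Type*} [Fintype V] [DecidableEq V]

/-- The column of the matrix `IAS(G) = (I | A | A+I)` indexed by `(v, i)`:
`i = 0` gives `φ(v)` (identity column), `i = 1` gives `χ(v)` (column of `A`),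
`i = 2` gives `ψ(v)` (column of `A + I`). -/
def iasCol (A : Matrix V V (ZMod 2)) : V × Fin 3 → V → ZMod 2 :=
  fun p w =>
    if p.2 = 0 then (if w = p.1 then 1 else 0)
    else if p.2 = 1 then A w p.1
    else A w p.1 + (if w = p.1 then 1 else 0)

/-- The rank of a subset of the ground set `W(G) = V × Fin 3` of the isotropic
matroid: the GF(2)-rank of the corresponding set of columns. -/
noncomputable def iasRank (A : Matrix V V (ZMod 2)) (S : Set (V × Fin 3)) : ℕ :=
  Module.finrank (ZMod 2) (Submodule.span (ZMod 2) (iasCol A '' S))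

/-- The connectivity function `λ(S) = r(S) + r(W - S) - r(M)`. -/
noncomputable def iasLambda (A : Matrix V V (ZMod 2)) (S : Set (V × Fin 3)) : ℕ :=
  iasRank A S + iasRank A Sᶜ - iasRank A Set.univ

/-- Independence in the isotropic matroid. -/
def iasIndep (A : Matrix V V (ZMod 2)) (S : Set (V × Fin 3)) : Prop :=
  LinearIndependent (ZMod 2) (fun s : S => iasCol A s.1)

/-- Circuits of the isotropic matroid: minimal dependent sets. -/
def iasCircuit (A : Matrix V V (ZMod 2)) (C : Set (V × Fin 3)) : Prop :=
  ¬ iasIndep A C ∧ ∀ S ⊂ C, iasIndep A S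

/-- An ordinary `k`-separation: `λ(S) < k` and `|S|, |W - S| ≥ k`. -/
def OrdinarySep (A : Matrix V V (ZMod 2)) (k : ℕ) (S : Set (V × Fin 3)) : Prop :=
  0 < k ∧ iasLambda A S < k ∧ k ≤ S.ncard ∧ k ≤ Sᶜ.ncard

/-- A cyclic `k`-separation: `λ(S) < k` and both `S` and `W - S` are dependent. -/
def CyclicSep (A : Matrix V V (ZMod 2)) (k : ℕ) (S : Set (V × Fin 3)) : Prop :=
  0 < k ∧ iasLambda A S < k ∧ ¬ iasIndep A S ∧ ¬ iasIndep A Sᶜ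

/-- A vertical `k`-separation: `λ(S) < k` and `r(S), r(W - S) ≥ k`. -/
def VerticalSep (A : Matrix V V (ZMod 2)) (k : ℕ) (S : Set (V × Fin 3)) : Prop :=
  0 < k ∧ iasLambda A S < k ∧ k ≤ iasRank A S ∧ k ≤ iasRank A Sᶜ

/-- `τ(M) = min {k : M has an ordinary k-separation}`, with `min ∅ = ∞`. -/
noncomputable def iasTau (A : Matrix V V (ZMod 2)) : ℕ∞ :=
  sInf {k : ℕ∞ | ∃ m : ℕ, (m : ℕ∞) = k ∧ ∃ S, OrdinarySep A m S}

/-- `κ*(M) = min ({k : M has a cyclic k-separation} ∪ {|W| - r(M)})`. -/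
noncomputable def iasKappaStar (A : Matrix V V (ZMod 2)) : ℕ :=
  sInf ({k : ℕ | ∃ S, CyclicSep A k S} ∪ {3 * Fintype.card V - iasRank A Set.univ})

/-- `κ(M) = min ({k : M has a vertical k-separation} ∪ {r(M)})`. -/
noncomputable def iasKappa (A : Matrix V V (ZMod 2)) : ℕ :=
  sInf ({k : ℕ | ∃ S, VerticalSep A k S} ∪ {iasRank A Set.univ})

/-- The simple graph underlying a looped simple graph given by its adjacency matrix. -/
def toSimpleGraph (A : Matrix V V (ZMod 2)) : SimpleGraph V where
  Adj v w := v ≠ w ∧ A v w = 1 ∧ A w v = 1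
  symm := ⟨fun v w ⟨h1, h2, h3⟩ => ⟨Ne.symm h1, h3, h2⟩⟩
  loopless := ⟨fun v h => h.1 rfl⟩

/-- The open neighborhood `N_G(v)`. -/
def nbhd (A : Matrix V V (ZMod 2)) (v : V) : Set V := {u | u ≠ v ∧ A v u = 1}

/-- `v` is a pendant vertex: `N_G(v) = {w}` for some `w`. -/
def IsPendant (A : Matrix V V (ZMod 2)) (v : V) : Prop := ∃ w, nbhd A v = {w}

/-- `G` has a pair of twin vertices: `v ≠ w` with `N_G(v) - {w} = N_G(w) - {v}`. -/
def HasTwins (A : Matrix V V (ZMod 2)) : Prop :=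
  ∃ v w, v ≠ w ∧ nbhd A v \ {w} = nbhd A w \ {v}

/-- The cut-rank `c_G(X)`: the GF(2)-rank of the submatrix `A[V - X, X]`
(columns indexed by `X`, rows indexed by `V - X`). -/
noncomputable def cutRank (A : Matrix V V (ZMod 2)) (X : Set V) : ℕ :=
  Module.finrank (ZMod 2)
    (Submodule.span (ZMod 2) ((fun x : V => fun w : ↥(Xᶜ) => A w.1 x) '' X))

/-- `τ_G(X) = ⋃_{x ∈ X} τ_G(x)`, the union of the vertex triples of members of `X`. -/
def tauSet (X : Set V) : Set (V × Fin 3) := {p | p.1 ∈ X}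

/-- Loop complementation at `v`. -/
def loopComp (A : Matrix V V (ZMod 2)) (v : V) : Matrix V V (ZMod 2) :=
  fun x y => A x y + if x = v ∧ y = v then 1 else 0

/-- Simple local complementation at `v`. -/
def simpleLocalComp (A : Matrix V V (ZMod 2)) (v : V) : Matrix V V (ZMod 2) :=
  fun x y => A x y +
    if x ≠ y ∧ (x ≠ v ∧ A v x = 1) ∧ (y ≠ v ∧ A v y = 1) then 1 else 0

/-- Non-simple local complementation at `v`. -/
def nonSimpleLocalComp (A : Matrix V V (ZMod 2)) (v : V) : Matrix V V (ZMod 2) :=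
  fun x y => simpleLocalComp A v x y + if x = y ∧ x ≠ v ∧ A v x = 1 then 1 else 0

/-- One local move. -/
def LocalStep (A B : Matrix V V (ZMod 2)) : Prop :=
  ∃ v, B = loopComp A v ∨ B = simpleLocalComp A v ∨ B = nonSimpleLocalComp A v

/-- Local equivalence: a finite sequence of loop complementations and
(simple or non-simple) local complementations. -/
def LocallyEquiv (A B : Matrix V V (ZMod 2)) : Prop :=
  Relation.ReflTransGen LocalStep A B

/-- `G` has a split: a bipartition `(V₁, V₂)` of `V` with `|V₁|, |V₂| ≥ 2` such that the
GF(2)-rank of `A[V₁, V₂]` is at most 1. -/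
def HasSplit (A : Matrix V V (ZMod 2)) : Prop :=
  ∃ X : Set V, 2 ≤ X.ncard ∧ 2 ≤ Xᶜ.ncard ∧ cutRank A X ≤ 1

/-- A transverse circuit: a circuit of the isotropic matroid meeting each
vertex triple at most once. -/
def IsTransverseCircuit (A : Matrix V V (ZMod 2)) (C : Set (V × Fin 3)) : Prop :=
  iasCircuit A C ∧ ∀ p ∈ C, ∀ q ∈ C, p.1 = q.1 → p = q

/-- An isotropic `k`-separation of `G`: `|X|, |V - X| ≥ k` and `c_G(X) < k`. -/
def IsotropicSep (A : Matrix V V (ZMod 2)) (k : ℕ) (X : Set V) : Prop :=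
  k ≤ X.ncard ∧ k ≤ Xᶜ.ncard ∧ cutRank A X < k

/-- The isotropic connectivity `κ_B(G)`, with `min ∅ = ∞`. -/
noncomputable def kappaB (A : Matrix V V (ZMod 2)) : ℕ∞ :=
  sInf {j : ℕ∞ | ∃ k : ℕ, (k : ℕ∞) = j ∧ ∃ X, IsotropicSep A k X}

/-- The 5-cycle `C₅`. -/
def C5mat : Matrix (Fin 5) (Fin 5) (ZMod 2) :=
  fun i j => if (i.val + 1) % 5 = j.val ∨ (j.val + 1) % 5 = i.val then 1 else 0

/-- The wheel `W₅` : a 5-cycle on `{0,…,4}` plus a hub `5` adjacent to all. -/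
def W5mat : Matrix (Fin 6) (Fin 6) (ZMod 2) :=
  fun i j =>
    if (i.val = 5 ∧ j.val ≠ 5) ∨ (j.val = 5 ∧ i.val ≠ 5) then 1
    else if i.val ≠ 5 ∧ j.val ≠ 5 ∧ ((i.val + 1) % 5 = j.val ∨ (j.val + 1) % 5 = i.val) then 1
    else 0

/-!
The connectivity function is `λ(S) = dim (⟨S⟩ ∩ ⟨W - S⟩)`, because the columns span `GF(2)^V`,
and every vertex triple is dependent since `φ(v) + χ(v) + ψ(v) = 0`. Off the diagonal, `χ(v)` and
`ψ(v)` agree with the column of `A` at `v`; hence columns of two distinct vertices are parallel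
exactly when one vertex is pendant on the other or the two are twins.

The upper bounds come from explicit separations: a zero column when `n = 1`, the triples over a
component when `G` is disconnected, a parallel pair, and a single vertex triple. For the lower
bounds let `G` be connected with `n > 1`, so that no column is zero. If `S` splits the triple of
`v`, the element of `τ(v)` alone on its side is the sum of the other two and so lies in
`⟨S⟩ ∩ ⟨W - S⟩`; when `λ(S) ≤ 1` and no columns are parallel, at most one triple is split. Let `X`
be the set of the other vertices whose triples lie in `S`. An edge `xy` with `x ∈ X`, `y ∉ X` would
give two vectors of `⟨S⟩ ∩ ⟨W - S⟩`, `χ(x)` restricted to `V - X` and `χ(y)` restricted to `X`,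
that are nonzero and differ at `y`. So `X` is empty or all of `V`, and `S` or `W - S` has at most
one element.
-/

omit [Fintype V] in
lemma iasCol_zero (A : Matrix V V (ZMod 2)) (v : V) : iasCol A (v, 0) = Pi.single v 1 := by
  funext w
  simp [iasCol, Pi.single_apply]

omit [Fintype V] in
lemma iasCol_apply_of_ne (A : Matrix V V (ZMod 2)) {v w : V} {i : Fin 3} (hi : i ≠ 0)
    (hw : w ≠ v) : iasCol A (v, i) w = A w v := by
  fin_cases i <;> simp_all [iasCol]

omit [Fintype V] in
lemma iasCol_eq_add (A : Matrix V V (ZMod 2)) (v : V) (i : Fin 3) :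
    iasCol A (v, i) = iasCol A (v, i + 1) + iasCol A (v, i + 2) := by
  funext w
  fin_cases i <;> simp [iasCol] <;>
    generalize (if w = v then (1 : ZMod 2) else 0) = e <;> generalize A w v = a <;>
    revert a e <;> decide

omit [Fintype V] in
lemma sum_iasCol_triple (A : Matrix V V (ZMod 2)) (v : V) : ∑ i, iasCol A (v, i) = 0 := by
  rw [Fin.sum_univ_three, iasCol_eq_add A v 0, zero_add, zero_add, add_assoc]
  funext w
  exact CharTwo.add_self_eq_zero (R := ZMod 2) _

omit [Fintype V] in
lemma exists_iasCol_eq_update (A : Matrix V V (ZMod 2)) (v : V) (a : ZMod 2) :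
    ∃ i ≠ 0, iasCol A (v, i) = Function.update (fun w => A w v) v a := by
  have h : ∀ a b : ZMod 2, b ≠ a → b + 1 = a := by decide
  by_cases hv : A v v = a
  · refine ⟨1, by decide, funext fun w => ?_⟩
    by_cases hw : w = v <;> simp_all [iasCol]
  · refine ⟨2, by decide, funext fun w => ?_⟩
    by_cases hw : w = v
    · subst hw
      simpa [iasCol] using h _ _ hv
    · simp [iasCol, hw]

noncomputable def iasSpan (A : Matrix V V (ZMod 2)) (S : Set (V × Fin 3)) :
    Submodule (ZMod 2) (V → ZMod 2) :=
  Submodule.span (ZMod 2) (iasCol A '' S)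

omit [Fintype V] in
lemma iasRank_eq_finrank (A : Matrix V V (ZMod 2)) (S : Set (V × Fin 3)) :
    iasRank A S = Module.finrank (ZMod 2) (iasSpan A S) :=
  rfl

omit [Fintype V] in
lemma iasCol_mem_iasSpan (A : Matrix V V (ZMod 2)) {S : Set (V × Fin 3)} {p : V × Fin 3}
    (hp : p ∈ S) : iasCol A p ∈ iasSpan A S :=
  Submodule.subset_span (Set.mem_image_of_mem _ hp)

omit [Fintype V] in
lemma single_mem_iasSpan (A : Matrix V V (ZMod 2)) {S : Set (V × Fin 3)} {v : V}
    (hv : (v, 0) ∈ S) : Pi.single v 1 ∈ iasSpan A S :=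
  iasCol_zero A v ▸ iasCol_mem_iasSpan A hv

lemma indicator_mem_of_forall_single_mem {K : Type*} [Semiring K] {N : Submodule K (V → K)}
    {Q : Set V} (hQ : ∀ q ∈ Q, Pi.single q 1 ∈ N) (f : V → K) : Q.indicator f ∈ N := by
  rw [← Finset.univ_sum_single (Q.indicator f)]
  refine Submodule.sum_mem _ fun q _ => ?_
  by_cases hq : q ∈ Q
  · rw [Set.indicator_of_mem hq, ← mul_one (f q), ← smul_eq_mul, Pi.single_smul']
    exact N.smul_mem (f q) (hQ q hq)
  · rw [Set.indicator_of_notMem hq, Pi.single_zero]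
    exact N.zero_mem

lemma iasSpan_univ (A : Matrix V V (ZMod 2)) : iasSpan A Set.univ = ⊤ := by
  refine eq_top_iff.2 fun f _ => ?_
  simpa using indicator_mem_of_forall_single_mem (Q := Set.univ)
    (fun v _ => single_mem_iasSpan A (Set.mem_univ (v, 0))) f

lemma iasRank_univ (A : Matrix V V (ZMod 2)) : iasRank A Set.univ = Fintype.card V := by
  rw [iasRank_eq_finrank, iasSpan_univ A, finrank_top, Module.finrank_fintype_fun_eq_card]

lemma iasRank_le_card (A : Matrix V V (ZMod 2)) (S : Set (V × Fin 3)) :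
    iasRank A S ≤ Fintype.card V :=
  (Submodule.finrank_le _).trans_eq (Module.finrank_fintype_fun_eq_card _)

lemma iasLambda_eq_finrank_inf (A : Matrix V V (ZMod 2)) (S : Set (V × Fin 3)) :
    iasLambda A S = Module.finrank (ZMod 2) ↥(iasSpan A S ⊓ iasSpan A Sᶜ) := by
  have hsup : iasSpan A S ⊔ iasSpan A Sᶜ = ⊤ := by
    rw [← iasSpan_univ A, iasSpan, iasSpan, iasSpan, ← Submodule.span_union,
      ← Set.image_union, Set.union_compl_self]
  have h := Submodule.finrank_sup_add_finrank_inf_eq (iasSpan A S) (iasSpan A Sᶜ)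
  rw [hsup, finrank_top, Module.finrank_fintype_fun_eq_card] at h
  rw [iasLambda, iasRank_univ, iasRank_eq_finrank, iasRank_eq_finrank]
  omega

lemma iasLambda_le_iasRank (A : Matrix V V (ZMod 2)) (S : Set (V × Fin 3)) :
    iasLambda A S ≤ iasRank A S := by
  have := iasRank_le_card A Sᶜ
  rw [iasLambda, iasRank_univ]
  omega

lemma iasIndep_iff_ncard_le_iasRank (A : Matrix V V (ZMod 2)) (S : Set (V × Fin 3)) :
    iasIndep A S ↔ S.ncard ≤ iasRank A S := by
  have := Fintype.ofFinite S
  rw [iasIndep, linearIndependent_iff_card_le_finrank_span, Set.finrank, ← Set.image_eq_range,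
    Set.ncard_eq_toFinset_card', Set.toFinset_card, iasRank]

omit [Fintype V] in
lemma not_iasIndep_of_forall_mem (A : Matrix V V (ZMod 2)) {S : Set (V × Fin 3)} {v : V}
    (h : ∀ i, (v, i) ∈ S) : ¬ iasIndep A S := by
  intro hS
  have hli := hS.comp (fun i : Fin 3 => (⟨(v, i), h i⟩ : S)) fun i j hij => by simpa using hij
  rw [Fintype.linearIndependent_iff] at hli
  exact one_ne_zero (hli (fun _ => 1) (by simpa using sum_iasCol_triple A v) 0)

omit [DecidableEq V] in
lemma ncard_add_ncard_compl_eq (S : Set (V × Fin 3)) :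
    S.ncard + Sᶜ.ncard = 3 * Fintype.card V := by
  rw [Set.ncard_add_ncard_compl, Nat.card_eq_fintype_card, Fintype.card_prod, Fintype.card_fin,
    mul_comm]

lemma ordinarySep_and_cyclicSep_of_not_iasIndep (A : Matrix V V (ZMod 2))
    {S : Set (V × Fin 3)} (hS : ¬ iasIndep A S) (hle : S.ncard ≤ Sᶜ.ncard) :
    OrdinarySep A S.ncard S ∧ CyclicSep A S.ncard S := by
  have hr : iasRank A S < S.ncard := not_le.1 ((iasIndep_iff_ncard_le_iasRank A S).not.1 hS)
  have hlam := iasLambda_le_iasRank A S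
  have hcompl : ¬ iasIndep A Sᶜ := by
    have := ncard_add_ncard_compl_eq S
    have := iasRank_le_card A Sᶜ
    rw [iasIndep_iff_ncard_le_iasRank]
    omega
  exact ⟨⟨by omega, by omega, le_rfl, hle⟩, ⟨by omega, by omega, hS, hcompl⟩⟩

lemma ZMod.eq_of_eq_one_iff {a b : ZMod 2} (h : a = 1 ↔ b = 1) : a = b := by
  revert a b
  decide

omit [Fintype V] in
lemma mem_nbhd_iff_iasCol {A : Matrix V V (ZMod 2)} (hA : A.IsSymm) {v t : V} {j : Fin 3}
    (hj : j ≠ 0) : t ∈ nbhd A v ↔ t ≠ v ∧ iasCol A (v, j) t = 1 := by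
  refine and_congr_right fun ht => ?_
  rw [iasCol_apply_of_ne A hj ht, hA.apply]

omit [Fintype V] in
lemma isPendant_of_single_eq_iasCol {A : Matrix V V (ZMod 2)} (hA : A.IsSymm) {u v : V}
    {j : Fin 3} (huv : u ≠ v) (hj : j ≠ 0) (h : Pi.single u 1 = iasCol A (v, j)) :
    IsPendant A v := by
  refine ⟨u, Set.ext fun t => ?_⟩
  rw [mem_nbhd_iff_iasCol hA hj, ← h, Set.mem_singleton_iff, Pi.single_apply]
  by_cases htu : t = u <;> simp [htu, huv]

omit [Fintype V] in
lemma hasTwins_of_iasCol_eq {A : Matrix V V (ZMod 2)} (hA : A.IsSymm) {u v : V} {i j : Fin 3}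
    (huv : u ≠ v) (hi : i ≠ 0) (hj : j ≠ 0) (h : iasCol A (u, i) = iasCol A (v, j)) :
    HasTwins A := by
  refine ⟨u, v, huv, Set.ext fun t => ?_⟩
  rw [Set.mem_sdiff, Set.mem_sdiff, mem_nbhd_iff_iasCol hA hi, mem_nbhd_iff_iasCol hA hj, h]
  tauto

omit [Fintype V] in
lemma iasCol_eq_single_of_isPendant {A : Matrix V V (ZMod 2)} (hA : A.IsSymm) {v w : V}
    (hvw : nbhd A v = {w}) : ∃ j ≠ 0, iasCol A (v, j) = Pi.single w 1 := by
  obtain ⟨j, hj, hcol⟩ := exists_iasCol_eq_update A v 0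
  have hw : w ≠ v := ((Set.ext_iff.1 hvw w).2 rfl).1
  refine ⟨j, hj, funext fun t => ZMod.eq_of_eq_one_iff ?_⟩
  by_cases htv : t = v
  · subst htv
    simp [hcol, hw.symm]
  · have := Set.ext_iff.1 hvw t
    rw [mem_nbhd_iff_iasCol hA hj, Set.mem_singleton_iff] at this
    simp [← this, htv, Pi.single_apply]

omit [Fintype V] in
lemma exists_iasCol_eq_of_hasTwins {A : Matrix V V (ZMod 2)} (hA : A.IsSymm)
    (h : HasTwins A) : ∃ p q : V × Fin 3, p.1 ≠ q.1 ∧ iasCol A p = iasCol A q := by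
  obtain ⟨v, w, hvw, hnbhd⟩ := h
  obtain ⟨j, hj, hv⟩ := exists_iasCol_eq_update A v (A v w)
  obtain ⟨k, hk, hw⟩ := exists_iasCol_eq_update A w (A w v)
  refine ⟨(v, j), (w, k), hvw, funext fun t => ?_⟩
  by_cases htv : t = v
  · subst htv
    simp [hv, hw, hvw]
  by_cases htw : t = w
  · subst htw
    simp [hv, hw, htv]
  have := Set.ext_iff.1 hnbhd t
  rw [Set.mem_sdiff, Set.mem_sdiff, mem_nbhd_iff_iasCol hA hj, mem_nbhd_iff_iasCol hA hk] at this
  exact ZMod.eq_of_eq_one_iff (by simpa [htv, htw] using this)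

omit [Fintype V] in
theorem exists_iasCol_eq_iff {A : Matrix V V (ZMod 2)} (hA : A.IsSymm) :
    (∃ p q : V × Fin 3, p.1 ≠ q.1 ∧ iasCol A p = iasCol A q) ↔
      (∃ v, IsPendant A v) ∨ HasTwins A := by
  constructor
  · rintro ⟨⟨u, i⟩, ⟨v, j⟩, huv, h⟩
    by_cases hi : i = 0 <;> by_cases hj : j = 0
    · subst hi hj
      have := congrFun h u
      simp [iasCol_zero, huv] at this
    · subst hi
      exact Or.inl ⟨v, isPendant_of_single_eq_iasCol hA huv hj (iasCol_zero A u ▸ h)⟩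
    · subst hj
      exact Or.inl
        ⟨u, isPendant_of_single_eq_iasCol hA huv.symm hi (iasCol_zero A v ▸ h.symm)⟩
    · exact Or.inr (hasTwins_of_iasCol_eq hA huv hi hj h)
  · rintro (⟨v, w, hvw⟩ | h)
    · obtain ⟨j, -, hj⟩ := iasCol_eq_single_of_isPendant hA hvw
      exact ⟨(v, j), (w, 0), ((Set.ext_iff.1 hvw w).2 rfl).1.symm, by rw [hj, iasCol_zero]⟩
    · exact exists_iasCol_eq_of_hasTwins hA h

lemma SimpleGraph.Preconnected.eq_empty_or_eq_univ {α : Type*} {G : SimpleGraph α}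
    (hG : G.Preconnected) {X : Set α} (hX : ∀ x ∈ X, ∀ y ∉ X, ¬ G.Adj x y) :
    X = ∅ ∨ X = Set.univ := by
  refine (Set.eq_empty_or_nonempty X).imp_right fun ⟨x, hx⟩ => ?_
  refine Set.eq_univ_of_forall fun y => by_contra fun hy => ?_
  obtain ⟨p⟩ := hG x y
  obtain ⟨d, -, hd₁, hd₂⟩ := p.exists_boundary_dart X hx hy
  exact hX _ hd₁ _ hd₂ d.adj

lemma iasCol_ne_zero {A : Matrix V V (ZMod 2)} (hconn : (toSimpleGraph A).Connected)
    (hn : 1 < Fintype.card V) (p : V × Fin 3) : iasCol A p ≠ 0 := by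
  obtain ⟨v, i⟩ := p
  obtain ⟨u, hu⟩ := Fintype.exists_ne_of_one_lt_card hn v
  obtain ⟨w, hadj⟩ : ∃ w, (toSimpleGraph A).Adj v w := by
    obtain ⟨p⟩ := hconn.preconnected v u
    cases p with
    | nil => exact absurd rfl hu
    | cons hadj _ => exact ⟨_, hadj⟩
  intro h
  by_cases hi : i = 0
  · have := congrFun h v
    simp [hi, iasCol_zero] at this
  · have := congrFun h w
    rw [iasCol_apply_of_ne A hi hadj.1.symm, hadj.2.2] at this
    exact one_ne_zero this

lemma eq_zero_or_eq_of_finrank_le_one {E : Type*} [AddCommGroup E] [Module (ZMod 2) E]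
    [Module.Finite (ZMod 2) E] {M : Submodule (ZMod 2) E} (hM : Module.finrank (ZMod 2) M ≤ 1)
    {x y : E} (hx : x ∈ M) (hy : y ∈ M) (hx₀ : x ≠ 0) : y = 0 ∨ y = x := by
  have hx₀' : (⟨x, hx⟩ : M) ≠ 0 := by simpa using hx₀
  have hM1 : Module.finrank (ZMod 2) M = 1 :=
    le_antisymm hM (Module.finrank_pos_iff_exists_ne_zero.2 ⟨_, hx₀'⟩)
  obtain ⟨c, hc⟩ := (finrank_eq_one_iff_of_nonzero' _ hx₀').1 hM1 ⟨y, hy⟩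
  have hc : c • x = y := congrArg Subtype.val hc
  have hZ : ∀ c : ZMod 2, c = 0 ∨ c = 1 := by decide
  rcases hZ c with rfl | rfl
  · exact Or.inl (by simpa using hc.symm)
  · exact Or.inr (by simpa using hc.symm)

lemma indicator_mem_inf {K : Type*} [Ring K] {M N : Submodule K (V → K)} {Q : Set V}
    (hM : ∀ p ∉ Q, Pi.single p 1 ∈ M) (hN : ∀ q ∈ Q, Pi.single q 1 ∈ N) {f : V → K}
    (hf : f ∈ M) : Q.indicator f ∈ M ⊓ N := by
  have hQ : Q.indicator f = f - Qᶜ.indicator f := by rw [← Set.indicator_compl, compl_compl]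
  exact ⟨hQ ▸ sub_mem hf (indicator_mem_of_forall_single_mem hM f),
    indicator_mem_of_forall_single_mem hN f⟩

theorem eq_empty_or_eq_univ_of_finrank_inf_le_one {A : Matrix V V (ZMod 2)}
    (hpre : (toSimpleGraph A).Preconnected) {M N : Submodule (ZMod 2) (V → ZMod 2)}
    (hMN : Module.finrank (ZMod 2) ↥(M ⊓ N) ≤ 1) {X : Set V}
    (hM : ∀ x ∈ X, Pi.single x 1 ∈ M) (hN : ∀ y ∉ X, Pi.single y 1 ∈ N)
    (hcolM : ∀ x ∈ X, ∃ i ≠ 0, iasCol A (x, i) ∈ M)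
    (hcolN : ∀ y ∉ X, ∃ j ≠ 0, iasCol A (y, j) ∈ N) :
    X = ∅ ∨ X = Set.univ := by
  refine hpre.eq_empty_or_eq_univ fun x hx y hy hadj => ?_
  obtain ⟨i, hi, hxM⟩ := hcolM x hx
  obtain ⟨j, hj, hyN⟩ := hcolN y hy
  have ha : Xᶜ.indicator (iasCol A (x, i)) ∈ M ⊓ N :=
    indicator_mem_inf (fun p hp => hM p (not_not.1 hp)) hN hxM
  have hb : X.indicator (iasCol A (y, j)) ∈ M ⊓ N :=
    inf_comm M N ▸ indicator_mem_inf hN hM hyN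
  have hay : Xᶜ.indicator (iasCol A (x, i)) y = 1 := by
    rw [Set.indicator_of_mem hy, iasCol_apply_of_ne A hi hadj.1.symm, hadj.2.2]
  have hbx : X.indicator (iasCol A (y, j)) x = 1 := by
    rw [Set.indicator_of_mem hx, iasCol_apply_of_ne A hj hadj.1, hadj.2.1]
  rcases eq_zero_or_eq_of_finrank_le_one hMN ha hb (fun h => by simp [h] at hay) with h | h
  · simp [h] at hbx
  · simp [← h, Set.indicator_of_notMem hy] at hay

def SplitsTriple (S : Set (V × Fin 3)) (v : V) : Prop :=
  (∃ i, (v, i) ∈ S) ∧ ∃ j, (v, j) ∉ S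

def IsLone (S : Set (V × Fin 3)) (v : V) (i : Fin 3) : Prop :=
  (v, i) ∈ S ∧ (v, i + 1) ∉ S ∧ (v, i + 2) ∉ S

omit [Fintype V] [DecidableEq V] in
lemma splitsTriple_compl {S : Set (V × Fin 3)} {v : V} :
    SplitsTriple Sᶜ v ↔ SplitsTriple S v := by
  simp [SplitsTriple, and_comm]

omit [Fintype V] [DecidableEq V] in
lemma mem_of_not_splitsTriple {S : Set (V × Fin 3)} {v : V} (h : ¬ SplitsTriple S v) {i : Fin 3}
    (hi : (v, i) ∈ S) (j : Fin 3) : (v, j) ∈ S :=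
  by_contra fun hj => h ⟨⟨i, hi⟩, j, hj⟩

omit [Fintype V] [DecidableEq V] in
lemma exists_isLone_of_splitsTriple {S : Set (V × Fin 3)} {v : V} (h : SplitsTriple S v) :
    (∃ i, IsLone S v i) ∨ ∃ i, IsLone Sᶜ v i := by
  have key : ∀ b : Fin 3 → Bool, (∃ i, b i) → (∃ j, b j = false) →
      (∃ i, b i ∧ b (i + 1) = false ∧ b (i + 2) = false) ∨
        ∃ i, b i = false ∧ b (i + 1) ∧ b (i + 2) := by
    decide
  classical
  obtain ⟨⟨i, hi⟩, j, hj⟩ := h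
  simpa [IsLone] using key (fun i => decide ((v, i) ∈ S)) ⟨i, by simpa⟩ ⟨j, by simpa⟩

omit [Fintype V] in
lemma IsLone.iasCol_mem_inf (A : Matrix V V (ZMod 2)) {S : Set (V × Fin 3)} {v : V} {i : Fin 3}
    (h : IsLone S v i) : iasCol A (v, i) ∈ iasSpan A S ⊓ iasSpan A Sᶜ :=
  ⟨iasCol_mem_iasSpan A h.1, iasCol_eq_add A v i ▸
    add_mem (iasCol_mem_iasSpan A h.2.1) (iasCol_mem_iasSpan A h.2.2)⟩

omit [Fintype V] in
lemma iasSpan_compl_inf_comm (A : Matrix V V (ZMod 2)) (S : Set (V × Fin 3)) :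
    iasSpan A Sᶜ ⊓ iasSpan A Sᶜᶜ = iasSpan A S ⊓ iasSpan A Sᶜ := by
  rw [compl_compl, inf_comm]

omit [Fintype V] in
lemma exists_iasCol_mem_inf_of_splitsTriple (A : Matrix V V (ZMod 2)) {S : Set (V × Fin 3)}
    {v : V} (h : SplitsTriple S v) : ∃ i, iasCol A (v, i) ∈ iasSpan A S ⊓ iasSpan A Sᶜ := by
  rcases exists_isLone_of_splitsTriple h with ⟨i, hi⟩ | ⟨i, hi⟩
  · exact ⟨i, hi.iasCol_mem_inf A⟩
  · exact ⟨i, iasSpan_compl_inf_comm A S ▸ hi.iasCol_mem_inf A⟩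

lemma eq_empty_or_eq_univ_of_not_splitsTriple {A : Matrix V V (ZMod 2)}
    (hpre : (toSimpleGraph A).Preconnected) {S : Set (V × Fin 3)}
    (hU : Module.finrank (ZMod 2) ↥(iasSpan A S ⊓ iasSpan A Sᶜ) ≤ 1)
    (hS : ∀ v, ¬ SplitsTriple S v) : S = ∅ ∨ S = Set.univ := by
  set X : Set V := {v | (v, 0) ∈ S}
  have hX : ∀ p, p ∈ S ↔ p.1 ∈ X := fun p =>
    ⟨fun h => mem_of_not_splitsTriple (hS p.1) h 0,
      fun h => mem_of_not_splitsTriple (hS p.1) h p.2⟩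
  have hXS : ∀ x ∈ X, ∀ i, (x, i) ∈ S := fun x hx i => (hX (x, i)).2 hx
  have hXSc : ∀ y ∉ X, ∀ i, (y, i) ∈ Sᶜ := fun y hy i => mt (hX (y, i)).1 hy
  rcases eq_empty_or_eq_univ_of_finrank_inf_le_one hpre hU
      (fun x hx => single_mem_iasSpan A (hXS x hx 0))
      (fun y hy => single_mem_iasSpan A (hXSc y hy 0))
      (fun x hx => ⟨1, by decide, iasCol_mem_iasSpan A (hXS x hx 1)⟩)
      (fun y hy => ⟨1, by decide, iasCol_mem_iasSpan A (hXSc y hy 1)⟩) with h | h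
  · exact Or.inl (Set.eq_empty_of_forall_notMem fun p hp => by simpa [h] using (hX p).1 hp)
  · exact Or.inr (Set.eq_univ_of_forall fun p => (hX p).2 (h ▸ Set.mem_univ _))

omit [Fintype V] [DecidableEq V] in
lemma IsLone.eq_of_mem {S : Set (V × Fin 3)} {v : V} {i j : Fin 3} (h : IsLone S v i)
    (hj : (v, j) ∈ S) : j = i := by
  have hfin : ∀ i j : Fin 3, j = i ∨ j = i + 1 ∨ j = i + 2 := by decide
  rcases hfin i j with rfl | rfl | rfl
  exacts [rfl, absurd hj h.2.1, absurd hj h.2.2]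

omit [Fintype V] in
lemma IsLone.single_mem_iasSpan_compl (A : Matrix V V (ZMod 2)) {S : Set (V × Fin 3)} {v : V}
    {i : Fin 3} (h : IsLone S v i) : Pi.single v 1 ∈ iasSpan A Sᶜ := by
  by_cases hi : i = 0
  · subst hi
    exact iasCol_zero A v ▸ (h.iasCol_mem_inf A).2
  · exact single_mem_iasSpan A fun h0 => hi (h.eq_of_mem h0).symm

omit [Fintype V] in
lemma IsLone.exists_iasCol_mem_iasSpan_compl (A : Matrix V V (ZMod 2)) {S : Set (V × Fin 3)}
    {v : V} {i : Fin 3} (h : IsLone S v i) : ∃ j ≠ 0, iasCol A (v, j) ∈ iasSpan A Sᶜ := by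
  have hfin : ∀ i : Fin 3, i + 1 ≠ 0 ∨ i + 2 ≠ 0 := by decide
  rcases hfin i with h0 | h0
  exacts [⟨_, h0, iasCol_mem_iasSpan A h.2.1⟩, ⟨_, h0, iasCol_mem_iasSpan A h.2.2⟩]

lemma eq_singleton_of_isLone {A : Matrix V V (ZMod 2)}
    (hpre : (toSimpleGraph A).Preconnected) {S : Set (V × Fin 3)}
    (hU : Module.finrank (ZMod 2) ↥(iasSpan A S ⊓ iasSpan A Sᶜ) ≤ 1) {v : V} {i : Fin 3}
    (hv : IsLone S v i) (hS : ∀ u ≠ v, ¬ SplitsTriple S u) : S = {(v, i)} := by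
  set X : Set V := {u | u ≠ v ∧ (u, 0) ∈ S}
  have hXS : ∀ x ∈ X, ∀ j, (x, j) ∈ S := fun x hx =>
    mem_of_not_splitsTriple (hS x hx.1) hx.2
  have hXSc : ∀ y ∉ X, y ≠ v → ∀ j, (y, j) ∈ Sᶜ := fun y hy hyv j hj =>
    hy ⟨hyv, mem_of_not_splitsTriple (hS y hyv) hj 0⟩
  have hsingle : ∀ y ∉ X, Pi.single y 1 ∈ iasSpan A Sᶜ := by
    intro y hy
    rcases eq_or_ne y v with rfl | hyv
    exacts [hv.single_mem_iasSpan_compl A, single_mem_iasSpan A (hXSc y hy hyv 0)]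
  have hcol : ∀ y ∉ X, ∃ j ≠ 0, iasCol A (y, j) ∈ iasSpan A Sᶜ := by
    intro y hy
    rcases eq_or_ne y v with rfl | hyv
    exacts [hv.exists_iasCol_mem_iasSpan_compl A,
      ⟨1, by decide, iasCol_mem_iasSpan A (hXSc y hy hyv 1)⟩]
  have hX : X = ∅ := (eq_empty_or_eq_univ_of_finrank_inf_le_one hpre hU
      (fun x hx => single_mem_iasSpan A (hXS x hx 0)) hsingle
      (fun x hx => ⟨1, by decide, iasCol_mem_iasSpan A (hXS x hx 1)⟩) hcol).resolve_right
    fun h => (h ▸ Set.mem_univ v : v ∈ X).1 rfl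
  refine Set.ext fun ⟨u, j⟩ => ⟨fun hp => ?_, fun hp => Set.mem_singleton_iff.1 hp ▸ hv.1⟩
  by_cases huv : u = v
  · subst huv
    rw [hv.eq_of_mem hp]
    rfl
  · have hu : u ∈ X := ⟨huv, mem_of_not_splitsTriple (hS u huv) hp 0⟩
    exact absurd (hX ▸ hu) (Set.notMem_empty u)

lemma eq_empty_or_eq_univ_of_iasLambda_eq_zero {A : Matrix V V (ZMod 2)}
    (hpre : (toSimpleGraph A).Preconnected) (h₀ : ∀ p, iasCol A p ≠ 0) {S : Set (V × Fin 3)}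
    (hl : iasLambda A S = 0) : S = ∅ ∨ S = Set.univ := by
  rw [iasLambda_eq_finrank_inf] at hl
  refine eq_empty_or_eq_univ_of_not_splitsTriple hpre (hl.trans_le zero_le_one) fun v hv => ?_
  obtain ⟨i, hi⟩ := exists_iasCol_mem_inf_of_splitsTriple A hv
  rw [Submodule.finrank_eq_zero.1 hl, Submodule.mem_bot] at hi
  exact h₀ _ hi

lemma subsingleton_of_iasLambda_le_one {A : Matrix V V (ZMod 2)}
    (hpre : (toSimpleGraph A).Preconnected) (h₀ : ∀ p, iasCol A p ≠ 0)
    (hpar : ∀ p q : V × Fin 3, p.1 ≠ q.1 → iasCol A p ≠ iasCol A q) {S : Set (V × Fin 3)}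
    (hl : iasLambda A S ≤ 1) : S.Subsingleton ∨ Sᶜ.Subsingleton := by
  rw [iasLambda_eq_finrank_inf] at hl
  by_cases hsplit : ∃ v, SplitsTriple S v
  · obtain ⟨v, hv⟩ := hsplit
    have hS : ∀ u ≠ v, ¬ SplitsTriple S u := by
      intro u hu hsu
      obtain ⟨i, hi⟩ := exists_iasCol_mem_inf_of_splitsTriple A hv
      obtain ⟨j, hj⟩ := exists_iasCol_mem_inf_of_splitsTriple A hsu
      rcases eq_zero_or_eq_of_finrank_le_one hl hi hj (h₀ _) with h | h
      exacts [h₀ _ h, hpar (u, j) (v, i) hu h]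
    rcases exists_isLone_of_splitsTriple hv with ⟨i, hi⟩ | ⟨i, hi⟩
    · exact Or.inl (eq_singleton_of_isLone hpre hl hi hS ▸ Set.subsingleton_singleton)
    · exact Or.inr (eq_singleton_of_isLone hpre (iasSpan_compl_inf_comm A S ▸ hl) hi
        (fun u hu => splitsTriple_compl.not.2 (hS u hu)) ▸ Set.subsingleton_singleton)
  · rcases eq_empty_or_eq_univ_of_not_splitsTriple hpre hl (not_exists.1 hsplit) with rfl | rfl
    · exact Or.inl Set.subsingleton_empty
    · exact Or.inr (Set.compl_univ ▸ Set.subsingleton_empty)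

omit [Fintype V] in
lemma iasIndep_of_subsingleton (A : Matrix V V (ZMod 2)) {S : Set (V × Fin 3)}
    (hS : S.Subsingleton) (h₀ : ∀ p, iasCol A p ≠ 0) : iasIndep A S :=
  have := hS.coe_sort
  (linearIndependent_subsingleton_index_iff _).2 fun p => h₀ p

omit [Fintype V] in
lemma iasSpan_tauSet_le {A : Matrix V V (ZMod 2)} {X : Set V}
    (hX : ∀ x ∈ X, ∀ y ∉ X, A y x = 0) :
    iasSpan A (tauSet X) ≤ Submodule.pi Xᶜ fun _ => ⊥ := by
  refine Submodule.span_le.2 ?_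
  rintro _ ⟨⟨x, i⟩, hx, rfl⟩ y hy
  have hyx : y ≠ x := fun h => hy (h ▸ hx)
  by_cases hi : i = 0
  · simp [hi, iasCol_zero, hyx]
  · simp [iasCol_apply_of_ne A hi hyx, hX x hx y hy]

lemma iasLambda_tauSet_eq_zero {A : Matrix V V (ZMod 2)} (hA : A.IsSymm) {X : Set V}
    (hX : ∀ x ∈ X, ∀ y ∉ X, A y x = 0) : iasLambda A (tauSet X) = 0 := by
  have hXc : ∀ y ∈ Xᶜ, ∀ x ∉ Xᶜ, A x y = 0 := fun y hy x hx =>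
    hA.apply x y ▸ hX x (not_not.1 hx) y hy
  have h₁ := iasSpan_tauSet_le hX
  have h₂ := iasSpan_tauSet_le hXc
  rw [iasLambda_eq_finrank_inf, Submodule.finrank_eq_zero, eq_bot_iff]
  rintro f ⟨hf₁, hf₂⟩
  rw [Submodule.mem_bot]
  funext y
  by_cases hy : y ∈ X
  · exact (Submodule.mem_pi.1 (h₂ hf₂)) y (not_not.2 hy)
  · exact (Submodule.mem_pi.1 (h₁ hf₁)) y hy

lemma exists_ordinarySep_and_cyclicSep_one_of_card_eq_one (A : Matrix V V (ZMod 2))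
    (h : Fintype.card V = 1) :
    ∃ S, OrdinarySep A 1 S ∧ CyclicSep A 1 S := by
  obtain ⟨v, hv⟩ := Fintype.card_eq_one_iff.1 h
  obtain ⟨j, -, hj⟩ := exists_iasCol_eq_update A v 0
  have hzero : iasCol A (v, j) = 0 := by
    rw [hj]
    funext w
    simp [hv w]
  have hdep : ¬ iasIndep A {(v, j)} := fun hS => hS.ne_zero ⟨(v, j), rfl⟩ hzero
  have hle : ({(v, j)} : Set (V × Fin 3)).ncard ≤ ({(v, j)} : Set (V × Fin 3))ᶜ.ncard := by
    have := ncard_add_ncard_compl_eq ({(v, j)} : Set (V × Fin 3))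
    rw [Set.ncard_singleton] at this ⊢
    omega
  exact ⟨_, Set.ncard_singleton (v, j) ▸ ordinarySep_and_cyclicSep_of_not_iasIndep A hdep hle⟩

lemma exists_ordinarySep_and_cyclicSep_one_of_not_preconnected {A : Matrix V V (ZMod 2)}
    (hA : A.IsSymm) (h : ¬ (toSimpleGraph A).Preconnected) :
    ∃ S, OrdinarySep A 1 S ∧ CyclicSep A 1 S := by
  obtain ⟨u, w, huw⟩ : ∃ u w, ¬ (toSimpleGraph A).Reachable u w := by
    simpa [SimpleGraph.Preconnected] using h
  set X : Set V := {t | (toSimpleGraph A).Reachable u t}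
  have hX : ∀ x ∈ X, ∀ y ∉ X, A y x = 0 := by
    intro x hx y hy
    have hZ : ∀ a : ZMod 2, a ≠ 0 → a = 1 := by decide
    by_contra hyx
    replace hyx := hZ _ hyx
    exact hy (hx.trans (SimpleGraph.Adj.reachable
      ⟨fun h => hy (h ▸ hx), hA.apply y x ▸ hyx, hyx⟩))
  have hlam := iasLambda_tauSet_eq_zero hA hX
  have hu : ∀ i, (u, i) ∈ tauSet X := fun _ => SimpleGraph.Reachable.refl u
  have hw : ∀ i, (w, i) ∈ (tauSet X)ᶜ := fun _ => huw
  refine ⟨tauSet X, ⟨one_pos, by omega, ?_, ?_⟩, ⟨one_pos, by omega, ?_, ?_⟩⟩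
  · exact (Set.ncard_pos (Set.toFinite _)).2 ⟨_, hu 0⟩
  · exact (Set.ncard_pos (Set.toFinite _)).2 ⟨_, hw 0⟩
  · exact not_iasIndep_of_forall_mem A hu
  · exact not_iasIndep_of_forall_mem A hw

lemma ordinarySep_and_cyclicSep_two_of_iasCol_eq (A : Matrix V V (ZMod 2))
    (hn : 1 < Fintype.card V) {p q : V × Fin 3} (hpq : p.1 ≠ q.1) (h : iasCol A p = iasCol A q) :
    OrdinarySep A 2 {p, q} ∧ CyclicSep A 2 {p, q} := by
  have hne : p ≠ q := fun h => hpq (h ▸ rfl)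
  have hdep : ¬ iasIndep A {p, q} := fun hS => hne <| congrArg Subtype.val
    (hS.injective h : (⟨p, by simp⟩ : ({p, q} : Set _)) = ⟨q, by simp⟩)
  have hle : ({p, q} : Set (V × Fin 3)).ncard ≤ ({p, q} : Set (V × Fin 3))ᶜ.ncard := by
    have := ncard_add_ncard_compl_eq ({p, q} : Set (V × Fin 3))
    rw [Set.ncard_pair hne] at this ⊢
    omega
  exact Set.ncard_pair hne ▸ ordinarySep_and_cyclicSep_of_not_iasIndep A hdep hle

lemma ordinarySep_and_cyclicSep_three_tauSet_singleton (A : Matrix V V (ZMod 2))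
    (hn : 1 < Fintype.card V) (v : V) :
    OrdinarySep A 3 (tauSet {v}) ∧ CyclicSep A 3 (tauSet {v}) := by
  have hcard : (tauSet {v}).ncard = 3 := by
    have : tauSet {v} = Set.range fun i : Fin 3 => (v, i) := by
      ext ⟨u, i⟩
      simp [tauSet, eq_comm]
    rw [this, Set.ncard_range_of_injective (Prod.mk_right_injective v), Nat.card_eq_fintype_card,
      Fintype.card_fin]
  have hle : (tauSet {v}).ncard ≤ (tauSet {v})ᶜ.ncard := by
    have := ncard_add_ncard_compl_eq (tauSet {v})
    omega
  exact hcard ▸ ordinarySep_and_cyclicSep_of_not_iasIndep A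
    (not_iasIndep_of_forall_mem A fun _ => Set.mem_singleton v) hle

lemma iasTau_eq_and_iasKappaStar_eq {A : Matrix V V (ZMod 2)} {k : ℕ} {S : Set (V × Fin 3)}
    (hS : OrdinarySep A k S ∧ CyclicSep A k S)
    (hmin : ∀ m, 0 < m → m < k → ∀ T, ¬ OrdinarySep A m T ∧ ¬ CyclicSep A m T) :
    iasTau A = k ∧ iasKappaStar A = k := by
  have hk : k ≤ 3 * Fintype.card V - iasRank A Set.univ := by
    obtain ⟨-, -, h₁, h₂⟩ := hS.1
    have := ncard_add_ncard_compl_eq S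
    rw [iasRank_univ]
    omega
  constructor
  · refine le_antisymm (sInf_le ⟨k, rfl, S, hS.1⟩) (le_sInf ?_)
    rintro _ ⟨m, rfl, T, hT⟩
    exact Nat.cast_le.2 (not_lt.1 fun hm => (hmin m hT.1 hm T).1 hT)
  · refine le_antisymm (Nat.sInf_le (Or.inl ⟨S, hS.2⟩)) (le_csInf ⟨_, Or.inr rfl⟩ ?_)
    rintro m (⟨T, hT⟩ | rfl)
    · exact not_lt.1 fun hm => (hmin m hT.1 hm T).2 hT
    · exact hk

lemma iasKappaStar_eq_zero_of_card_eq_zero (A : Matrix V V (ZMod 2))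
    (h : Fintype.card V = 0) : iasKappaStar A = 0 :=
  Nat.sInf_eq_zero.2 (Or.inl (Or.inr (by simp [h])))

lemma iasTau_eq_top_of_card_eq_zero (A : Matrix V V (ZMod 2)) (h : Fintype.card V = 0) :
    iasTau A = ⊤ := by
  refine sInf_eq_top.2 ?_
  rintro _ ⟨m, rfl, S, hm, -, hS, -⟩
  have := ncard_add_ncard_compl_eq S
  omega

lemma not_ordinarySep_and_not_cyclicSep_of_lt_two {A : Matrix V V (ZMod 2)}
    (hconn : (toSimpleGraph A).Connected) (hn : 1 < Fintype.card V) {m : ℕ} (hm₀ : 0 < m)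
    (hm : m < 2) (T : Set (V × Fin 3)) :
    ¬ OrdinarySep A m T ∧ ¬ CyclicSep A m T := by
  have h₀ := iasCol_ne_zero hconn hn
  have htriv : iasLambda A T < m → T = ∅ ∨ T = Set.univ := fun hl =>
    eq_empty_or_eq_univ_of_iasLambda_eq_zero hconn.preconnected h₀ (by omega)
  constructor
  · rintro ⟨-, hl, h₁, h₂⟩
    rcases htriv hl with rfl | rfl
    · simp only [Set.ncard_empty] at h₁
      omega
    · simp only [Set.compl_univ, Set.ncard_empty] at h₂
      omega
  · rintro ⟨-, hl, h₁, h₂⟩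
    rcases htriv hl with rfl | rfl
    · exact h₁ (iasIndep_of_subsingleton A Set.subsingleton_empty h₀)
    · exact h₂ (iasIndep_of_subsingleton A (by simp) h₀)

lemma not_ordinarySep_and_not_cyclicSep_of_lt_three {A : Matrix V V (ZMod 2)}
    (hconn : (toSimpleGraph A).Connected) (hn : 1 < Fintype.card V)
    (hpar : ∀ p q : V × Fin 3, p.1 ≠ q.1 → iasCol A p ≠ iasCol A q)
    {m : ℕ} (hm₀ : 0 < m) (hm : m < 3) (T : Set (V × Fin 3)) :
    ¬ OrdinarySep A m T ∧ ¬ CyclicSep A m T := by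
  rcases Nat.lt_or_ge m 2 with hm2 | hm2
  · exact not_ordinarySep_and_not_cyclicSep_of_lt_two hconn hn hm₀ hm2 T
  have h₀ := iasCol_ne_zero hconn hn
  have hsub : iasLambda A T < m → T.Subsingleton ∨ Tᶜ.Subsingleton := fun hl =>
    subsingleton_of_iasLambda_le_one hconn.preconnected h₀ hpar (by omega)
  constructor
  · rintro ⟨-, hl, h₁, h₂⟩
    rcases hsub hl with h | h <;> have := (Set.ncard_le_one (Set.toFinite _)).2 h <;> omega
  · rintro ⟨-, hl, h₁, h₂⟩
    rcases hsub hl with h | h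
    exacts [h₁ (iasIndep_of_subsingleton A h h₀), h₂ (iasIndep_of_subsingleton A h h₀)]

theorem stmt1 (A : Matrix V V (ZMod 2)) (hA : A.IsSymm) :
    (Fintype.card V = 0 → iasKappaStar A = 0 ∧ iasTau A = ⊤) ∧
    ((Fintype.card V = 1 ∨ ¬ (toSimpleGraph A).Preconnected) →
      iasTau A = 1 ∧ iasKappaStar A = 1) ∧
    ((1 < Fintype.card V ∧ (toSimpleGraph A).Connected ∧
        ((∃ v, IsPendant A v) ∨ HasTwins A)) →
      iasTau A = 2 ∧ iasKappaStar A = 2) ∧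
    ((1 < Fintype.card V ∧ (toSimpleGraph A).Connected ∧
        ¬ (∃ v, IsPendant A v) ∧ ¬ HasTwins A) →
      iasTau A = 3 ∧ iasKappaStar A = 3) := by
  refine ⟨fun h => ⟨iasKappaStar_eq_zero_of_card_eq_zero A h,
    iasTau_eq_top_of_card_eq_zero A h⟩, fun h => ?_, fun ⟨hn, hconn, hpt⟩ => ?_,
    fun ⟨hn, hconn, hpend, htw⟩ => ?_⟩
  · obtain ⟨S, hS⟩ := h.elim (exists_ordinarySep_and_cyclicSep_one_of_card_eq_one A)
      (exists_ordinarySep_and_cyclicSep_one_of_not_preconnected hA)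
    exact iasTau_eq_and_iasKappaStar_eq hS fun m hm₀ hm => absurd hm (by omega)
  · obtain ⟨p, q, hpq, h⟩ := (exists_iasCol_eq_iff hA).2 hpt
    exact iasTau_eq_and_iasKappaStar_eq (ordinarySep_and_cyclicSep_two_of_iasCol_eq A hn hpq h)
      fun m hm₀ hm => not_ordinarySep_and_not_cyclicSep_of_lt_two hconn hn hm₀ hm
  · have hpar : ∀ p q : V × Fin 3, p.1 ≠ q.1 → iasCol A p ≠ iasCol A q := fun p q hpq h =>
      not_or.2 ⟨hpend, htw⟩ ((exists_iasCol_eq_iff hA).1 ⟨p, q, hpq, h⟩)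
    obtain ⟨v⟩ := hconn.nonempty
    exact iasTau_eq_and_iasKappaStar_eq (ordinarySep_and_cyclicSep_three_tauSet_singleton A hn v)
      fun m hm₀ hm => not_ordinarySep_and_not_cyclicSep_of_lt_three hconn hn hpar hm₀ hm
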